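/- With the assumptions of the mixed-Gaussian random-horizon model, the Expected Shortfall at level c satisfies ES = (1/(1-c)) ∫₀^∞ [ -μ_h Φ((-μ_h - VaR)/σ_h) + σ_h φ((-μ_h - VaR)/σ_h) ] dF_H(h), where VaR solves ∫₀^∞ Φ((μ_h + VaR)/σ_h) dF_H(h) = c. -/

import Mathlib

open MeasureTheory ProbabilityTheory Real Set

/-- Standard normal CDF. -/
noncomputable def stdNormalCDF (x : ℝ) : ℝ :=
  ((gaussianReal 0 1) (Set.Iic x)).toReal

/-- Standard normal density. -/
noncomputable def stdNormalPDF (x : ℝ) : ℝ :=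
  Real.exp (-x ^ 2 / 2) / Real.sqrt (2 * Real.pi)

/-!
With `a = -v`, `𝔼[Y; Y ≤ a] = a ℙ(Y ≤ a) - 𝔼[(a - Y)⁺]`. By the layer-cake formula and Tonelli,
`𝔼[(a - Y)⁺] = ∫₀^∞ ℙ(Y ≤ a - t) dt = ∫ ∫₀^∞ Φ((a - μ_h - t)/σ_h) dt dF_H(h)`, and the inner
integral is `σ_h Ψ((a - μ_h)/σ_h)` with `Ψ u = u Φ u + φ u`, the primitive of `Φ` vanishing at
`-∞`. Expanding `Ψ` leaves `∫ (μ_h Φ(z_h) - σ_h φ(z_h)) dF_H(h)`, `z_h = (a - μ_h)/σ_h`.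
-/

open Filter Topology

lemma stdNormalPDF_nonneg (x : ℝ) : 0 ≤ stdNormalPDF x := by
  unfold stdNormalPDF; positivity

lemma continuous_stdNormalPDF : Continuous stdNormalPDF := by
  unfold stdNormalPDF; fun_prop

lemma stdNormalPDF_eq_gaussianPDFReal : stdNormalPDF = gaussianPDFReal 0 1 := by
  funext x
  simp [stdNormalPDF, gaussianPDFReal, div_eq_inv_mul, mul_comm]

lemma integrable_stdNormalPDF : Integrable stdNormalPDF := by
  rw [stdNormalPDF_eq_gaussianPDFReal]; exact integrable_gaussianPDFReal 0 1

lemma hasDerivAt_stdNormalPDF (x : ℝ) : HasDerivAt stdNormalPDF (-x * stdNormalPDF x) x := by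
  have hexp : HasDerivAt (fun y : ℝ => -y ^ 2 / 2) (-x) x :=
    ((hasDerivAt_pow 2 x).neg.div_const 2).congr_deriv (by push_cast; ring)
  have h : HasDerivAt (fun y => rexp (-y ^ 2 / 2) / √(2 * π))
      (rexp (-x ^ 2 / 2) * -x / √(2 * π)) x := hexp.exp.div_const _
  exact h.congr_deriv (by simp only [stdNormalPDF]; ring)

lemma tendsto_stdNormalPDF_atBot : Tendsto stdNormalPDF atBot (𝓝 0) := by
  have hsq : Tendsto (fun x : ℝ => -x ^ 2 / 2) atBot atBot := by
    refine Tendsto.atBot_div_const two_pos (tendsto_neg_atTop_atBot.comp ?_)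
    simpa only [sq, id] using tendsto_id.atBot_mul_atBot₀ (tendsto_id (α := ℝ) (x := atBot))
  have h := (tendsto_exp_atBot.comp hsq).div_const (√(2 * π))
  rwa [zero_div] at h

lemma integrable_mul_stdNormalPDF : Integrable fun s : ℝ => s * stdNormalPDF s := by
  have h := integrable_rpow_mul_exp_neg_mul_sq (b := 1 / 2) (by norm_num) (s := 1) (by norm_num)
  refine (h.div_const (√(2 * π))).congr (ae_of_all _ fun x => ?_)
  simp only [rpow_one, stdNormalPDF]
  ring_nf

lemma integral_Iic_mul_stdNormalPDF (z : ℝ) :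
    ∫ s in Iic z, s * stdNormalPDF s = -stdNormalPDF z := by
  have h := integral_Iic_of_hasDerivAt_of_tendsto' (f := fun s => -stdNormalPDF s) (a := z)
    (fun x _ => (hasDerivAt_stdNormalPDF x).neg.congr_deriv (by ring))
    integrable_mul_stdNormalPDF.integrableOn (by simpa using tendsto_stdNormalPDF_atBot.neg)
  simpa using h

lemma stdNormalCDF_eq_integral (x : ℝ) : stdNormalCDF x = ∫ s in Iic x, stdNormalPDF s := by
  rw [stdNormalCDF, gaussianReal_apply_eq_integral 0 one_ne_zero,
    ENNReal.toReal_ofReal (setIntegral_nonneg measurableSet_Iic fun s _ =>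
      gaussianPDFReal_nonneg 0 1 s), stdNormalPDF_eq_gaussianPDFReal]

lemma stdNormalCDF_nonneg (x : ℝ) : 0 ≤ stdNormalCDF x := ENNReal.toReal_nonneg

lemma stdNormalCDF_le_one (x : ℝ) : stdNormalCDF x ≤ 1 :=
  ENNReal.toReal_le_of_le_ofReal zero_le_one (by simpa using prob_le_one)

lemma hasDerivAt_stdNormalCDF (x : ℝ) : HasDerivAt stdNormalCDF (stdNormalPDF x) x := by
  have hsplit : ∀ u,
      stdNormalCDF u = (∫ s in Iic 0, stdNormalPDF s) + ∫ s in (0 : ℝ)..u, stdNormalPDF s := by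
    intro u
    rw [stdNormalCDF_eq_integral, ← intervalIntegral.integral_Iic_sub_Iic
      integrable_stdNormalPDF.integrableOn integrable_stdNormalPDF.integrableOn]
    ring
  rw [funext hsplit]
  exact (intervalIntegral.integral_hasDerivAt_right integrable_stdNormalPDF.intervalIntegrable
    integrable_stdNormalPDF.aestronglyMeasurable.stronglyMeasurableAtFilter
    continuous_stdNormalPDF.continuousAt).const_add _

lemma continuous_stdNormalCDF : Continuous stdNormalCDF :=
  continuous_iff_continuousAt.2 fun x => (hasDerivAt_stdNormalCDF x).continuousAt

lemma integrable_stdNormalCDF_comp {α : Type*} [MeasurableSpace α] (ν : Measure α)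
    [IsFiniteMeasure ν] {f : α → ℝ} (hf : Measurable f) :
    Integrable (fun x => stdNormalCDF (f x)) ν :=
  (integrable_const (1 : ℝ)).mono' (continuous_stdNormalCDF.measurable.comp hf).aestronglyMeasurable
    (ae_of_all _ fun x => by
      rw [norm_of_nonneg (stdNormalCDF_nonneg _)]; exact stdNormalCDF_le_one _)

/-- `Ψ u = 𝔼[(u - Z)⁺]` for `Z` standard normal. -/
noncomputable def stdNormalIntegratedCDF (u : ℝ) : ℝ := u * stdNormalCDF u + stdNormalPDF u

lemma hasDerivAt_stdNormalIntegratedCDF (u : ℝ) :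
    HasDerivAt stdNormalIntegratedCDF (stdNormalCDF u) u :=
  (((hasDerivAt_id u).mul (hasDerivAt_stdNormalCDF u)).add (hasDerivAt_stdNormalPDF u)).congr_deriv
    (by simp)

lemma stdNormalIntegratedCDF_nonneg (u : ℝ) : 0 ≤ stdNormalIntegratedCDF u := by
  -- `u Φ u = ∫_{s ≤ u} u φ s ≥ ∫_{s ≤ u} s φ s = -φ u`
  have hle : ∫ s in Iic u, s * stdNormalPDF s ≤ ∫ s in Iic u, u * stdNormalPDF s :=
    setIntegral_mono_on integrable_mul_stdNormalPDF.integrableOn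
      (integrable_stdNormalPDF.const_mul u).integrableOn measurableSet_Iic
      fun s hs => mul_le_mul_of_nonneg_right hs (stdNormalPDF_nonneg s)
  rw [integral_Iic_mul_stdNormalPDF, integral_const_mul, ← stdNormalCDF_eq_integral] at hle
  unfold stdNormalIntegratedCDF
  linarith

lemma tendsto_stdNormalIntegratedCDF_atBot : Tendsto stdNormalIntegratedCDF atBot (𝓝 0) := by
  refine tendsto_of_tendsto_of_tendsto_of_le_of_le' tendsto_const_nhds tendsto_stdNormalPDF_atBot
    (Eventually.of_forall stdNormalIntegratedCDF_nonneg) ?_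
  filter_upwards [eventually_le_atBot 0] with u hu
  have := mul_nonpos_of_nonpos_of_nonneg hu (stdNormalCDF_nonneg u)
  unfold stdNormalIntegratedCDF
  linarith

lemma lintegral_Ioi_stdNormalCDF_sub_div (x : ℝ) {s : ℝ} (hs : 0 < s) :
    ∫⁻ t in Ioi 0, ENNReal.ofReal (stdNormalCDF ((x - t) / s))
      = ENNReal.ofReal (s * stdNormalIntegratedCDF (x / s)) := by
  have hderiv : ∀ t ∈ Ici (0 : ℝ), HasDerivAt (fun t => -s * stdNormalIntegratedCDF ((x - t) / s))
      (stdNormalCDF ((x - t) / s)) t := by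
    intro t _
    have hz : HasDerivAt (fun t => (x - t) / s) (-1 / s) t :=
      ((hasDerivAt_id t).const_sub x).div_const s
    exact (((hasDerivAt_stdNormalIntegratedCDF _).comp t hz).const_mul (-s)).congr_deriv
      (by field_simp)
  have hlim : Tendsto (fun t => -s * stdNormalIntegratedCDF ((x - t) / s)) atTop (𝓝 0) := by
    have hz : Tendsto (fun t : ℝ => (x - t) / s) atTop atBot :=
      (tendsto_atBot_add_const_left _ x tendsto_neg_atTop_atBot).atBot_div_const hs
    simpa using (tendsto_stdNormalIntegratedCDF_atBot.comp hz).const_mul (-s)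
  have hpos : ∀ t ∈ Ioi (0 : ℝ), 0 ≤ stdNormalCDF ((x - t) / s) := fun t _ => stdNormalCDF_nonneg _
  rw [← ofReal_integral_eq_lintegral_ofReal (integrableOn_Ioi_deriv_of_nonneg' hderiv hpos hlim)
    (ae_of_all _ fun t => stdNormalCDF_nonneg _),
    integral_Ioi_of_hasDerivAt_of_nonneg' hderiv hpos hlim]
  simp

section Mixture

variable {Ω : Type*} [MeasurableSpace Ω]

lemma lintegral_ofReal_sub_eq_lintegral_measure_le (P : Measure Ω) {Y : Ω → ℝ}
    (hY : AEMeasurable Y P) (a : ℝ) :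
    ∫⁻ ω, ENNReal.ofReal (a - Y ω) ∂P = ∫⁻ t in Ioi 0, P {ω | Y ω ≤ a - t} := by
  have hlayer := lintegral_eq_lintegral_meas_le P (f := fun ω => max (a - Y ω) 0)
    (ae_of_all _ fun ω => le_max_right _ _) ((aemeasurable_const.sub hY).max aemeasurable_const)
  simp only [ENNReal.ofReal_max, ENNReal.ofReal_zero, zero_le, sup_of_le_left] at hlayer
  rw [hlayer]
  refine setLIntegral_congr_fun measurableSet_Ioi fun t (ht : 0 < t) => congrArg P ?_
  ext ω
  simp only [mem_ofPred_eq, le_max_iff, not_le.2 ht, or_false]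
  constructor <;> intro h <;> linarith

lemma setIntegral_le_eq_sub_integral_max (P : Measure Ω) [IsFiniteMeasure P] {Y : Ω → ℝ}
    (hY : Measurable Y) (hYint : Integrable Y P) (a : ℝ) :
    ∫ ω in {ω | Y ω ≤ a}, Y ω ∂P = a * P.real {ω | Y ω ≤ a} - ∫ ω, max (a - Y ω) 0 ∂P := by
  have hset : MeasurableSet {ω | Y ω ≤ a} := measurableSet_le hY measurable_const
  have hmax : ∫ ω, max (a - Y ω) 0 ∂P = ∫ ω in {ω | Y ω ≤ a}, (a - Y ω) ∂P := by
    rw [← setIntegral_eq_integral_of_forall_compl_eq_zero (s := {ω | Y ω ≤ a})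
      fun ω (hω : ¬ Y ω ≤ a) => max_eq_right (by linarith)]
    exact setIntegral_congr_fun hset fun ω (hω : Y ω ≤ a) => max_eq_left (by linarith)
  rw [hmax, integral_sub (integrable_const a).integrableOn hYint.integrableOn, setIntegral_const,
    smul_eq_mul]
  ring

variable {P : Measure Ω} {Y : Ω → ℝ} {ν : Measure ℝ} {μ σ : ℝ → ℝ}

lemma lintegral_ofReal_sub_of_cdf_eq_mixture [IsFiniteMeasure P] [IsFiniteMeasure ν]
    (hY : AEMeasurable Y P) (hμ : Measurable μ) (hσ : Measurable σ) (hσpos : ∀ h, 0 < σ h)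
    (hmix : ∀ x, (P {ω | Y ω ≤ x}).toReal = ∫ h, stdNormalCDF ((x - μ h) / σ h) ∂ν) (a : ℝ) :
    ∫⁻ ω, ENNReal.ofReal (a - Y ω) ∂P
      = ∫⁻ h, ENNReal.ofReal (σ h * stdNormalIntegratedCDF ((a - μ h) / σ h)) ∂ν := by
  have hcdf : ∀ t, P {ω | Y ω ≤ a - t}
      = ∫⁻ h, ENNReal.ofReal (stdNormalCDF ((a - μ h - t) / σ h)) ∂ν := by
    intro t
    rw [← ENNReal.ofReal_toReal (measure_ne_top P _), hmix, ofReal_integral_eq_lintegral_ofReal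
      (integrable_stdNormalCDF_comp ν (f := fun h => (a - t - μ h) / σ h)
        ((measurable_const.sub hμ).div hσ))
      (ae_of_all _ fun h => stdNormalCDF_nonneg _)]
    simp only [sub_right_comm]
  rw [lintegral_ofReal_sub_eq_lintegral_measure_le P hY, lintegral_congr hcdf,
    lintegral_lintegral_swap]
  · exact lintegral_congr fun h => lintegral_Ioi_stdNormalCDF_sub_div _ (hσpos h)
  · exact (ENNReal.measurable_ofReal.comp (continuous_stdNormalCDF.measurable.comp
      (((measurable_const.sub (hμ.comp measurable_snd)).sub measurable_fst).div
        (hσ.comp measurable_snd)))).aemeasurable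

lemma setIntegral_le_of_cdf_eq_mixture [IsFiniteMeasure P] [IsFiniteMeasure ν]
    (hY : Measurable Y) (hYint : Integrable Y P) (hμ : Measurable μ) (hσ : Measurable σ)
    (hσpos : ∀ h, 0 < σ h)
    (hmix : ∀ x, (P {ω | Y ω ≤ x}).toReal = ∫ h, stdNormalCDF ((x - μ h) / σ h) ∂ν) (a : ℝ) :
    ∫ ω in {ω | Y ω ≤ a}, Y ω ∂P
      = ∫ h, (μ h * stdNormalCDF ((a - μ h) / σ h) - σ h * stdNormalPDF ((a - μ h) / σ h)) ∂ν := by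
  set z : ℝ → ℝ := fun h => (a - μ h) / σ h
  set G : ℝ → ℝ := fun h => σ h * stdNormalIntegratedCDF (z h)
  have hz : Measurable z := (measurable_const.sub hμ).div hσ
  have hG : Measurable G := hσ.mul ((hz.mul (continuous_stdNormalCDF.measurable.comp hz)).add
    (continuous_stdNormalPDF.measurable.comp hz))
  have hG_nonneg : 0 ≤ᵐ[ν] G :=
    ae_of_all _ fun h => mul_nonneg (hσpos h).le (stdNormalIntegratedCDF_nonneg _)
  have hlin := lintegral_ofReal_sub_of_cdf_eq_mixture hY.aemeasurable hμ hσ hσpos hmix a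
  have hGint : Integrable G ν := by
    refine ⟨hG.aestronglyMeasurable, (hasFiniteIntegral_iff_ofReal hG_nonneg).2 ?_⟩
    rw [← hlin]
    exact ((integrable_const a).sub hYint).lintegral_lt_top
  have hmax : ∫ ω, max (a - Y ω) 0 ∂P = ∫ h, G h ∂ν := by
    rw [integral_eq_lintegral_of_nonneg_ae (f := fun ω => max (a - Y ω) 0)
        (ae_of_all _ fun ω => le_max_right _ _)
        ((measurable_const.sub hY).max measurable_const).aestronglyMeasurable,
      integral_eq_lintegral_of_nonneg_ae hG_nonneg hG.aestronglyMeasurable, ← hlin]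
    simp only [ENNReal.ofReal_max, ENNReal.ofReal_zero, zero_le, sup_of_le_left]
  rw [setIntegral_le_eq_sub_integral_max P hY hYint, measureReal_def, hmix, hmax,
    ← integral_const_mul, ← integral_sub ((integrable_stdNormalCDF_comp ν hz).const_mul a) hGint]
  refine integral_congr_ae (ae_of_all _ fun h => ?_)
  have := (hσpos h).ne'
  simp only [G, z, stdNormalIntegratedCDF]
  field_simp
  ring

end Mixture

theorem es_random_horizon_formula_general
    {Ω : Type*} [MeasureSpace Ω] [IsProbabilityMeasure (ℙ : Measure Ω)]
    (Y H : Ω → ℝ) (hYmeas : Measurable Y) (hYint : Integrable Y ℙ)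
    (μ σ : ℝ → ℝ) (hμ : Measurable μ) (hσ : Measurable σ)
    (hσpos : ∀ h, 0 < σ h)
    -- conditionally on H = h, Y is N(μ_h, σ_h²): the law of Y is the Gaussian mixture
    (hmix : ∀ x : ℝ, (ℙ {ω | Y ω ≤ x}).toReal
      = ∫ h, stdNormalCDF ((x - μ h) / σ h) ∂(Measure.map H ℙ))
    (c : ℝ)
    (v : ℝ) :
    -(1 / (1 - c)) * ∫ ω in {ω | Y ω ≤ -v}, Y ω ∂ℙ
      = (1 / (1 - c)) * ∫ h,
          (-(μ h) * stdNormalCDF ((-(μ h) - v) / σ h)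
            + σ h * stdNormalPDF ((-(μ h) - v) / σ h)) ∂(Measure.map H ℙ) := by
  rw [setIntegral_le_of_cdf_eq_mixture hYmeas hYint hμ hσ hσpos hmix, neg_mul, ← mul_neg,
    ← integral_neg]
  congr 2 with h
  rw [show -μ h - v = -v - μ h by ring]
  ring

/-- In the mixed-Gaussian random-horizon model, the Expected Shortfall
at level `c` satisfies
`ES = (1/(1-c)) ∫₀^∞ [-μ_h Φ((-μ_h - VaR)/σ_h) + σ_h φ((-μ_h - VaR)/σ_h)] dF_H(h)`,
where `VaR` solves `∫₀^∞ Φ((μ_h + VaR)/σ_h) dF_H(h) = c` and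
`ES := -(1/(1-c))·E[Y·1{Y ≤ -VaR}]` with `P(Y ≤ -VaR) = 1 - c`. -/
theorem es_random_horizon_formula
    {Ω : Type*} [MeasureSpace Ω] [IsProbabilityMeasure (ℙ : Measure Ω)]
    (Y H : Ω → ℝ) (hYmeas : Measurable Y) (hYint : Integrable Y ℙ)
    (hHmeas : Measurable H) (hHpos : ∀ᵐ ω ∂ℙ, 0 < H ω)
    (μ σ : ℝ → ℝ) (hμ : Measurable μ) (hσ : Measurable σ)
    (hσpos : ∀ h, 0 < σ h)
    -- conditionally on H = h, Y is N(μ_h, σ_h²): the law of Y is the Gaussian mixture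
    (hmix : ∀ x : ℝ, (ℙ {ω | Y ω ≤ x}).toReal
      = ∫ h, stdNormalCDF ((x - μ h) / σ h) ∂(Measure.map H ℙ))
    (c : ℝ) (hc : c ∈ Set.Ioo (0 : ℝ) 1)
    (v : ℝ)
    (hv : ∫ h, stdNormalCDF ((μ h + v) / σ h) ∂(Measure.map H ℙ) = c)
    (hvprob : (ℙ {ω | Y ω ≤ -v}).toReal = 1 - c) :
    -(1 / (1 - c)) * ∫ ω in {ω | Y ω ≤ -v}, Y ω ∂ℙ
      = (1 / (1 - c)) * ∫ h,
          (-(μ h) * stdNormalCDF ((-(μ h) - v) / σ h)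
            + σ h * stdNormalPDF ((-(μ h) - v) / σ h)) ∂(Measure.map H ℙ) :=
  es_random_horizon_formula_general Y H hYmeas hYint μ σ hμ hσ hσpos hmix c v
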